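/- Let D = (V, A) be a finite digraph in which every vertex has out-degree at least one and in-degree at least one, let B be its adjacency matrix over the natural numbers, and for W ⊆ V let Ī_W be the V × V diagonal matrix with diagonal entry 0 at each vertex of W and 1 elsewhere. For any finite sequence W_1, ..., W_l of subsets of V, the following three statements are equivalent: (1) Ī_{W_1} B Ī_{W_2} ⋯ B Ī_{W_l} = 0; (2) B Ī_{W_1} B Ī_{W_2} ⋯ B Ī_{W_l} = 0; (3) Ī_{W_1} B Ī_{W_2} ⋯ B Ī_{W_l} B = 0. -/

import Mathlib

open scoped Classical

/-- The adjacency matrix over `ℕ` of the digraph with arc relation `A`. -/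
noncomputable def adjMat {V : Type} [Fintype V] (A : V → V → Prop) : Matrix V V ℕ :=
  fun u w => if A u w then 1 else 0

/-- The diagonal matrix `Ī_W`, with diagonal entry `0` at vertices of `W` and `1`
elsewhere. -/
noncomputable def diagCompl {V : Type} [Fintype V] [DecidableEq V] (W : Finset V) :
    Matrix V V ℕ :=
  Matrix.diagonal (fun v => if v ∈ W then 0 else 1)

/-- The product `Ī_{W_1} B Ī_{W_2} ⋯ B Ī_{W_{l+1}}` (0-indexed: `prodMat A W l`
uses the cop sets `W 0, ..., W l`). -/
noncomputable def prodMat {V : Type} [Fintype V] [DecidableEq V]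
    (A : V → V → Prop) (W : ℕ → Finset V) : ℕ → Matrix V V ℕ
  | 0 => diagCompl (W 0)
  | i + 1 => prodMat A W i * adjMat A * diagCompl (W (i + 1))

section

variable {V ι : Type} [Fintype V]

-- Over `ℕ` a sum vanishes only if every summand does, and an arc `u → v` makes
-- `M v w` one of the summands of `(B * M) u w`.
theorem adjMat_mul_eq_zero_iff {A : V → V → Prop} (hin : ∀ v : V, ∃ u, A u v)
    (M : Matrix V ι ℕ) : adjMat A * M = 0 ↔ M = 0 := by
  refine ⟨fun h => ?_, fun h => by rw [h, Matrix.mul_zero]⟩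
  ext v w
  obtain ⟨u, huv⟩ := hin v
  have hsum : ∑ x, adjMat A u x * M x w = 0 := by
    rw [← Matrix.mul_apply, h, Matrix.zero_apply]
  simpa [adjMat, huv] using Finset.sum_eq_zero_iff.mp hsum v (Finset.mem_univ v)

theorem mul_adjMat_eq_zero_iff {A : V → V → Prop} (hout : ∀ v : V, ∃ u, A v u)
    (M : Matrix ι V ℕ) : M * adjMat A = 0 ↔ M = 0 := by
  refine ⟨fun h => ?_, fun h => by rw [h, Matrix.zero_mul]⟩
  ext w v
  obtain ⟨u, hvu⟩ := hout v
  have hsum : ∑ x, M w x * adjMat A x u = 0 := by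
    rw [← Matrix.mul_apply, h, Matrix.zero_apply]
  simpa [adjMat, hvu] using Finset.sum_eq_zero_iff.mp hsum v (Finset.mem_univ v)

end

/-- If every vertex has out-degree at least one and in-degree at least one, then for
any finite sequence of cop sets `W_1, ..., W_l` (here `W 0, ..., W l`), the vanishing
of `Ī_{W_1} B ⋯ B Ī_{W_l}`, of `B Ī_{W_1} B ⋯ B Ī_{W_l}`, and of
`Ī_{W_1} B ⋯ B Ī_{W_l} B` are equivalent. -/
theorem prodMat_zero_iff_of_min_degrees {V : Type} [Fintype V] [DecidableEq V]
    (A : V → V → Prop)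
    (hout : ∀ v : V, ∃ u, A v u) (hin : ∀ v : V, ∃ u, A u v)
    (W : ℕ → Finset V) (l : ℕ) :
    (adjMat A * prodMat A W l = 0 ↔ prodMat A W l = 0) ∧
    (prodMat A W l * adjMat A = 0 ↔ prodMat A W l = 0) :=
  ⟨adjMat_mul_eq_zero_iff hin _, mul_adjMat_eq_zero_iff hout _⟩
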